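/- arXiv:1501.01670 — 3 statements merged into one kernel-verified Lean document; each statement's English description precedes it below -/
import Mathlib

section
/- Let A be a nonsingular 2×2 integer matrix having a real eigenvalue of modulus one. Then the induced map on the torus T² = ℝ²/ℤ² is not topologically transitive. -/
/-!
An eigenvalue `ε = ±1` of the integer matrix `A` is an integer, so it has an integer left
eigenvector `v ≠ 0`. The character `χ_v(x, y) = v₀ x + v₁ y` of the torus is a continuous
surjection onto the circle with `χ_v ∘ g = ε • χ_v`, so it maps every orbit of `g` into the
finite set `{χ_v(z), -χ_v(z)}`. A dense orbit would have a dense image under `χ_v`, and a finite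
subset of the circle is not dense.
-/

open MeasureTheory Topology Polynomial Set

attribute [local instance] ZeroLEOneClass.factZeroLtOne

noncomputable section

/-- The two-dimensional torus `ℝ²/ℤ²`. -/
abbrev T2 : Type := AddCircle (1 : ℝ) × AddCircle (1 : ℝ)

/-- The canonical projection `π : ℝ² → T²`. -/
def pr : ℝ × ℝ → T2 := fun p => ((p.1 : AddCircle (1 : ℝ)), (p.2 : AddCircle (1 : ℝ)))

/-- The linear action of a `2×2` integer matrix on `ℝ²`. -/
def matAct (A : Matrix (Fin 2) (Fin 2) ℤ) (p : ℝ × ℝ) : ℝ × ℝ :=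
  (((A 0 0 : ℤ) : ℝ) * p.1 + ((A 0 1 : ℤ) : ℝ) * p.2,
   ((A 1 0 : ℤ) : ℝ) * p.1 + ((A 1 1 : ℤ) : ℝ) * p.2)

/-- The action of a `2×2` integer matrix on `ℤ² ≅ π₁(T²)`. -/
def matActZ (A : Matrix (Fin 2) (Fin 2) ℤ) (v : ℤ × ℤ) : ℤ × ℤ :=
  (A 0 0 * v.1 + A 0 1 * v.2, A 1 0 * v.1 + A 1 1 * v.2)

/-- `f` preserves the Haar (Lebesgue) measure of the torus:
`λ(f⁻¹(A)) = λ(A)` for every Borel set `A`. -/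
def AreaPreserving (f : T2 → T2) : Prop :=
  ∀ s : Set T2, MeasurableSet s → volume (f ⁻¹' s) = volume s

/-- `f` is topologically transitive: some forward orbit is dense. -/
def TopTransitive (f : T2 → T2) : Prop :=
  ∃ x : T2, Dense (Set.range fun n : ℕ => f^[n] x)

/-- The open set is regular: it equals the interior of its closure. -/
def IsRegularOpenSet (U : Set T2) : Prop :=
  U = interior (closure U)

/-- A connected open set `U ⊆ T²` is elementary if the canonical projection `pr`
restricts to a homeomorphism from each connected component of `pr ⁻¹' U` onto `U`. -/
def IsElementary (U : Set T2) : Prop :=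
  ∀ x ∈ pr ⁻¹' U,
    ∃ e : (connectedComponentIn (pr ⁻¹' U) x) ≃ₜ U,
      ∀ y : connectedComponentIn (pr ⁻¹' U) x, (e y : T2) = pr (y : ℝ × ℝ)

open Function Matrix

instance AddCircle.instInfinite {𝕜 : Type*} [AddCommGroup 𝕜] [LinearOrder 𝕜] [IsOrderedAddMonoid 𝕜]
    [DenselyOrdered 𝕜] [Archimedean 𝕜] (p : 𝕜) [Fact (0 < p)] : Infinite (AddCircle p) :=
  (equivIco p 0).infinite_iff.mpr (Ico_infinite (by simpa using Fact.out)).to_subtype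

theorem Dense.not_finite_image {X Y : Type*} [TopologicalSpace X] [TopologicalSpace Y] [T1Space Y]
    [Infinite Y] {F : X → Y} (hF : Continuous F) (hFd : DenseRange F) {s : Set X}
    (hs : Dense s) : ¬ (F '' s).Finite := by
  intro hfin
  have himage : F '' s = univ := by
    rw [← hfin.isClosed.closure_eq, (hFd.dense_image hF hs).closure_eq]
  exact infinite_univ (himage ▸ hfin)

theorem Function.Semiconj.finite_image_orbit_of_smul {X M G : Type*} [Monoid G] [Finite G]
    [MulAction G M] {f : X → X} {F : X → M} {ε : G} (h : Semiconj F f (ε • ·)) (x : X) :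
    (F '' range fun n => f^[n] x).Finite := by
  refine (finite_range fun a : G => a • F x).subset ?_
  rintro _ ⟨_, ⟨n, rfl⟩, rfl⟩
  exact ⟨ε ^ n, by rw [(h.iterate_right n).eq, smul_iterate]⟩

namespace Matrix

variable {n R S : Type*} [Fintype n] [DecidableEq n] [CommRing R] [CommRing S]

theorem isRoot_charpoly_map_iff {f : R →+* S} (hf : Injective f) (M : Matrix n n R) (c : R) :
    (M.map f).charpoly.IsRoot (f c) ↔ M.charpoly.IsRoot c := by
  rw [charpoly_map, IsRoot, eval_map, eval₂_hom, map_eq_zero_iff f hf, IsRoot]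

theorem exists_vecMul_eq_smul_of_isRoot_charpoly [IsDomain R] {M : Matrix n n R} {c : R}
    (h : M.charpoly.IsRoot c) : ∃ v ≠ 0, v ᵥ* M = c • v := by
  obtain ⟨v, hv, hker⟩ := exists_vecMul_eq_zero_iff.mpr ((M.eval_charpoly c).symm.trans h)
  refine ⟨v, hv, ?_⟩
  rw [vecMul_sub, sub_eq_zero] at hker
  rw [← hker]
  ext i
  simp [vecMul, dotProduct, scalar_apply, diagonal, mul_comm]

end Matrix

theorem pr_surjective : Surjective pr := by
  rintro ⟨a, b⟩
  induction a using QuotientAddGroup.induction_on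
  induction b using QuotientAddGroup.induction_on
  exact ⟨(_, _), rfl⟩

def torusChar (v : Fin 2 → ℤ) (z : T2) : AddCircle (1 : ℝ) := v 0 • z.1 + v 1 • z.2

theorem continuous_torusChar (v : Fin 2 → ℤ) : Continuous (torusChar v) :=
  ((continuous_zsmul _).comp continuous_fst).add ((continuous_zsmul _).comp continuous_snd)

theorem torusChar_pr (v : Fin 2 → ℤ) (p : ℝ × ℝ) :
    torusChar v (pr p) = ((v 0 * p.1 + v 1 * p.2 : ℝ) : AddCircle (1 : ℝ)) := by
  simp only [torusChar, pr]
  rw [← AddCircle.coe_zsmul, ← AddCircle.coe_zsmul, ← AddCircle.coe_add, zsmul_eq_mul,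
    zsmul_eq_mul]

theorem torusChar_surjective {v : Fin 2 → ℤ} (hv : v ≠ 0) : Surjective (torusChar v) := by
  intro t
  induction t using QuotientAddGroup.induction_on with | H r => ?_
  rcases Fin.exists_fin_two.mp (Function.ne_iff.mp hv) with h | h <;>
    have h' : (_ : ℝ) ≠ 0 := Int.cast_ne_zero.mpr h
  · exact ⟨pr (r / v 0, 0), by rw [torusChar_pr]; simp [mul_div_cancel₀ _ h']⟩
  · exact ⟨pr (0, r / v 1), by rw [torusChar_pr]; simp [mul_div_cancel₀ _ h']⟩

theorem torusChar_matAct {A : Matrix (Fin 2) (Fin 2) ℤ} {v : Fin 2 → ℤ} {c : ℤ}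
    (hv : v ᵥ* A = c • v) (p : ℝ × ℝ) :
    torusChar v (pr (matAct A p)) = c • torusChar v (pr p) := by
  have hcoord (j : Fin 2) : (v 0 * A 0 j + v 1 * A 1 j : ℝ) = c * v j := by
    exact_mod_cast by simpa [vecMul, dotProduct, Fin.sum_univ_two] using congrFun hv j
  rw [torusChar_pr, torusChar_pr, ← AddCircle.coe_zsmul, zsmul_eq_mul]
  congr 1
  simp only [matAct]
  linear_combination p.1 * hcoord 0 + p.2 * hcoord 1

theorem statement2_general
    (A : Matrix (Fin 2) (Fin 2) ℤ)
    (heig : ∃ c : ℝ, |c| = 1 ∧ (Matrix.charpoly (A.map (Int.cast : ℤ → ℝ))).IsRoot c)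
    (g : T2 → T2) (hg : ∀ p : ℝ × ℝ, g (pr p) = pr (matAct A p)) :
    ¬ TopTransitive g := by
  obtain ⟨c, hc, hroot⟩ := heig
  obtain ⟨ε, rfl⟩ : ∃ ε : ℤˣ, ((ε : ℤ) : ℝ) = c := by
    rcases abs_eq zero_le_one |>.mp hc with rfl | rfl
    exacts [⟨1, by simp⟩, ⟨-1, by simp⟩]
  obtain ⟨v, hv0, hv⟩ := exists_vecMul_eq_smul_of_isRoot_charpoly
    ((A.isRoot_charpoly_map_iff (f := Int.castRingHom ℝ) Int.cast_injective _).mp hroot)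
  have hsemi : Semiconj (torusChar v) g (ε • ·) := by
    intro z
    obtain ⟨p, rfl⟩ := pr_surjective z
    rw [hg]
    exact torusChar_matAct hv p
  rintro ⟨x, hx⟩
  exact hx.not_finite_image (continuous_torusChar v) (torusChar_surjective hv0).denseRange
    (hsemi.finite_image_orbit_of_smul x)

/-- If a nonsingular `2×2` integer matrix has a real eigenvalue of
modulus one, then the map it induces on the torus is not topologically transitive. -/
theorem statement2
    (A : Matrix (Fin 2) (Fin 2) ℤ) (hA : A.det ≠ 0)
    (heig : ∃ c : ℝ, |c| = 1 ∧ (Matrix.charpoly (A.map (Int.cast : ℤ → ℝ))).IsRoot c)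
    (g : T2 → T2) (hg : ∀ p : ℝ × ℝ, g (pr p) = pr (matAct A p)) :
    ¬ TopTransitive g :=
  statement2_general A heig g hg
end
end

section
/- Let f : T² → T² be an area preserving non-invertible toral endomorphism (degree at least two) and U ⊂ T² a strictly f-invariant regular open set. Then for every connected component U₀ of U there exists n ≥ 1 such that f⁻ⁿ(U₀) = U₀. -/
open MeasureTheory Topology Polynomial Set

attribute [local instance] ZeroLEOneClass.factZeroLtOne

noncomputable section

/-!
Components of the open set `U` are open, hence of positive measure, and `f` maps each of them
into a component. Poincaré recurrence brings some point of `U₀` back to `U₀` under an iterate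
`f^[n]`, so `f^[n]` maps `U₀` into itself. Then `f^[n] ⁻¹' U₀` is a union of components of `U`
containing `U₀` and of the same measure, so a further component would be a nonempty open null set.
-/

instance AddCircle.locallyConnectedSpace (p : ℝ) : LocallyConnectedSpace (AddCircle p) :=
  isQuotientMap_quotient_mk'.isCoinducing.locallyConnectedSpace

section Components

variable {X : Type*} [TopologicalSpace X] {f : X → X} {U : Set X} {x y : X}

theorem Continuous.mapsTo_connectedComponentIn_self (hf : Continuous f) (hU : MapsTo f U U)
    (hx : x ∈ U) : MapsTo f (connectedComponentIn U x) (connectedComponentIn U (f x)) :=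
  (hf.continuousOn.mapsTo_connectedComponentIn hx).mono_right
    (connectedComponentIn_mono _ (image_subset_iff.2 hU))

theorem disjoint_connectedComponentIn_of_notMem (h : y ∉ connectedComponentIn U x) :
    Disjoint (connectedComponentIn U y) (connectedComponentIn U x) :=
  Set.disjoint_left.2 fun z hzy hzx => h <| by
    rw [connectedComponentIn_eq hzx, ← connectedComponentIn_eq hzy]
    exact mem_connectedComponentIn (connectedComponentIn_nonempty_iff.1 ⟨z, hzy⟩)

end Components

section MeasurePreserving

variable {X : Type*} [TopologicalSpace X] [LocallyConnectedSpace X] [MeasurableSpace X]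
  [OpensMeasurableSpace X] {μ : Measure X} [IsFiniteMeasure μ] {f : X → X} {U : Set X} {x : X}

theorem MeasureTheory.MeasurePreserving.exists_iterate_mem_connectedComponentIn
    [μ.IsOpenPosMeasure] (hμ : MeasurePreserving f μ μ) (hf : Continuous f) (hUo : IsOpen U)
    (hU : MapsTo f U U) (hx : x ∈ U) : ∃ n ≠ 0, f^[n] x ∈ connectedComponentIn U x := by
  have hC : IsOpen (connectedComponentIn U x) := hUo.connectedComponentIn
  obtain ⟨y, hy, n, hn, hny⟩ := hμ.exists_mem_iterate_mem hC.measurableSet.nullMeasurableSet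
    (hC.measure_ne_zero μ ⟨x, mem_connectedComponentIn hx⟩)
  have hny' : f^[n] y ∈ connectedComponentIn U (f^[n] x) :=
    (hf.iterate n).mapsTo_connectedComponentIn_self (hU.iterate n) hx hy
  refine ⟨n, hn, ?_⟩
  rw [connectedComponentIn_eq hny, ← connectedComponentIn_eq hny']
  exact mem_connectedComponentIn (hU.iterate n hx)

theorem MeasureTheory.MeasurePreserving.preimage_connectedComponentIn_eq_self
    [μ.IsOpenPosMeasure] (hμ : MeasurePreserving f μ μ) (hf : Continuous f) (hUo : IsOpen U)
    (hU : f ⁻¹' U = U) (hx : x ∈ U) (hfx : f x ∈ connectedComponentIn U x) :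
    f ⁻¹' connectedComponentIn U x = connectedComponentIn U x := by
  set C := connectedComponentIn U x
  have hmaps : MapsTo f U U := by simpa only [hU] using mapsTo_preimage f U
  have hCsub : C ⊆ f ⁻¹' C := by
    have h := hf.mapsTo_connectedComponentIn_self hmaps hx
    rw [← connectedComponentIn_eq hfx] at h
    exact h
  have hCo : IsOpen C := hUo.connectedComponentIn
  have hnull : μ (f ⁻¹' C \ C) = 0 := by
    rw [measure_sdiff hCsub hCo.measurableSet.nullMeasurableSet (measure_ne_top μ C),
      hμ.measure_preimage hCo.measurableSet.nullMeasurableSet, tsub_self]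
  refine hCsub.antisymm' fun y hy => ?_
  by_contra hyC
  have hyU : y ∈ U := hU ▸ connectedComponentIn_subset U x hy
  have hD : connectedComponentIn U y ⊆ f ⁻¹' C \ C := fun z hz =>
    ⟨show f z ∈ C by simpa only [← connectedComponentIn_eq hy] using
        hf.mapsTo_connectedComponentIn_self hmaps hyU hz,
      (disjoint_connectedComponentIn_of_notMem hyC).notMem_of_mem_left hz⟩
  exact (hUo.connectedComponentIn.measure_ne_zero μ ⟨y, mem_connectedComponentIn hyU⟩)
    (measure_mono_null hD hnull)

theorem MeasureTheory.MeasurePreserving.exists_preimage_iterate_connectedComponentIn_eq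
    [μ.IsOpenPosMeasure] (hμ : MeasurePreserving f μ μ) (hf : Continuous f) (hUo : IsOpen U)
    (hU : f ⁻¹' U = U) (hx : x ∈ U) :
    ∃ n ≠ 0, f^[n] ⁻¹' connectedComponentIn U x = connectedComponentIn U x := by
  obtain ⟨n, hn, hnx⟩ := hμ.exists_iterate_mem_connectedComponentIn hf hUo
    (by simpa only [hU] using mapsTo_preimage f U) hx
  have hUn : f^[n] ⁻¹' U = U := by rw [preimage_iterate_eq, Function.iterate_fixed hU]
  exact ⟨n, hn, (hμ.iterate n).preimage_connectedComponentIn_eq_self (hf.iterate n) hUo hUn hx hnx⟩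

end MeasurePreserving

theorem AreaPreserving.measurePreserving {f : T2 → T2} (hf : Continuous f)
    (hpres : AreaPreserving f) : MeasurePreserving f :=
  ⟨hf.measurable, Measure.ext fun s hs => by rw [Measure.map_apply hf.measurable hs, hpres s hs]⟩

theorem statement14_general
    (f : T2 → T2) (hf : IsLocalHomeomorph f) (hpres : AreaPreserving f)
    (U : Set T2) (hUopen : IsOpen U) (hinv : f ⁻¹' U = U)
    (U₀ : Set T2) (hU₀ : ∃ x ∈ U, U₀ = connectedComponentIn U x) :
    ∃ n : ℕ, 1 ≤ n ∧ f^[n] ⁻¹' U₀ = U₀ := by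
  obtain ⟨x, hx, rfl⟩ := hU₀
  obtain ⟨n, hn, hper⟩ := (hpres.measurePreserving hf.continuous)
    |>.exists_preimage_iterate_connectedComponentIn_eq hf.continuous hUopen hinv hx
  exact ⟨n, Nat.one_le_iff_ne_zero.2 hn, hper⟩

/-- If `f` is an area preserving non-invertible toral endomorphism
(degree `|det A| ≥ 2`) and `U` a strictly `f`-invariant regular open set, then every
connected component `U₀` of `U` satisfies `f⁻ⁿ(U₀) = U₀` for some `n ≥ 1`. -/
theorem statement14
    (f : T2 → T2) (hf : IsLocalHomeomorph f) (hpres : AreaPreserving f)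
    (A : Matrix (Fin 2) (Fin 2) ℤ) (hdeg : 2 ≤ |A.det|)
    (g : T2 → T2) (hgc : Continuous g)
    (hg : ∀ p : ℝ × ℝ, g (pr p) = pr (matAct A p))
    (hhom : ContinuousMap.Homotopic ⟨f, hf.continuous⟩ ⟨g, hgc⟩)
    (U : Set T2) (hreg : IsRegularOpenSet U) (hUopen : IsOpen U) (hinv : f ⁻¹' U = U)
    (U₀ : Set T2) (hU₀ : ∃ x ∈ U, U₀ = connectedComponentIn U x) :
    ∃ n : ℕ, 1 ≤ n ∧ f^[n] ⁻¹' U₀ = U₀ :=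
  statement14_general f hf hpres U hUopen hinv U₀ hU₀
end
end

section
/- Let γ and σ be loops in T² whose homotopy classes [γ] and [σ], regarded as elements of π₁(T²) ≅ ℤ², are linearly independent over ℤ. Then the images of γ and σ intersect: there exist s, t with γ(s) = σ(t). -/
open MeasureTheory Topology Polynomial Set

theorem Real.fact_zero_lt_one : Fact ((0 : ℝ) < 1) :=
  ⟨zero_lt_one⟩

attribute [local instance] Real.fact_zero_lt_one

noncomputable section

/-!
Lift the two loops to quasi-periodic maps `Γ̃, S̃ : ℝ → ℝ²` with `Γ̃ (u + 1) = Γ̃ u + a` and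
`S̃ (v + 1) = S̃ v + b`. Then `(u, v) ↦ Γ̃ u - S̃ v` is a bounded perturbation of the linear map
`(u, v) ↦ u • a - v • b`, which is invertible because `a` and `b` are independent, and any zero
of it projects to a common point of the two loops.

A bounded perturbation `f` of the identity of `ℂ` has a zero: otherwise `f` would have a
continuous logarithm on all of `ℂ` (which is simply connected), while on a circle of large radius
`f z / z` stays close to `1`, so `log f` increases by `2πi` once around it.
-/

namespace Complex

theorem exists_continuous_exp_eq {X : Type*} [TopologicalSpace X] [SimplyConnectedSpace X]
    [LocallyPathConnectedSpace X] {f : X → ℂ} (hf : Continuous f) (hf₀ : ∀ x, f x ≠ 0) :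
    ∃ L : X → ℂ, Continuous L ∧ ∀ x, exp (L x) = f x := by
  obtain ⟨x₀⟩ := (inferInstance : Nonempty X)
  obtain ⟨L, ⟨-, hL⟩, -⟩ := isCoveringMapOn_exp.existsUnique_continuousMap_lifts ⟨f, hf⟩
    (exp_log (hf₀ x₀)) hf₀
  exact ⟨L, L.continuous, congrFun hL⟩

theorem sub_eq_sub_of_exp_eq {X : Type*} [TopologicalSpace X] [PreconnectedSpace X]
    {g₁ g₂ : X → ℂ} (h₁ : Continuous g₁) (h₂ : Continuous g₂)
    (h : ∀ x, exp (g₁ x) = exp (g₂ x)) (x x' : X) : g₁ x - g₂ x = g₁ x' - g₂ x' :=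
  isCoveringMap_exp.const_of_comp (h₁.sub h₂) (fun _ _ => by simp [exp_sub, h]) x x'

theorem exists_eq_zero_of_norm_sub_le {f : ℂ → ℂ} (hf : Continuous f) {C : ℝ}
    (hC : ∀ z, ‖f z - z‖ ≤ C) : ∃ z, f z = 0 := by
  by_contra! hf₀
  obtain ⟨L, hLc, hL⟩ := exists_continuous_exp_eq hf hf₀
  set R : ℝ := C + 1
  have hR : 0 < R := by linarith [(norm_nonneg _).trans (hC 0)]
  set c : ℝ → ℂ := fun t => R * exp (t * I)
  have hc₀ : ∀ t, c t ≠ 0 := fun t => mul_ne_zero (by exact_mod_cast hR.ne') (exp_ne_zero _)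
  -- on the circle of radius `R > C`, `f z / z` lies within distance `1` of `1`
  have hslit : ∀ t, f (c t) / c t ∈ slitPlane := by
    intro t
    have hnorm : ‖c t‖ = R := by simp [c, norm_exp_ofReal_mul_I, hR.le]
    rw [show f (c t) / c t = 1 + (f (c t) - c t) / c t by field_simp [hc₀ t]; ring]
    apply mem_slitPlane_of_norm_lt_one
    rw [norm_div, hnorm, div_lt_one hR]
    linarith [hC (c t)]
  set ℓ : ℝ → ℂ := fun t => log R + t * I + log (f (c t) / c t)
  have hℓc : Continuous ℓ := by
    refine continuous_const.add (by fun_prop) |>.add (continuous_iff_continuousAt.2 fun t => ?_)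
    exact ((hf.comp (by fun_prop)).div (by fun_prop) hc₀).continuousAt.clog (hslit t)
  have hℓ : ∀ t, exp (L (c t)) = exp (ℓ t) := by
    intro t
    rw [hL, exp_add, exp_add, exp_log (div_ne_zero (hf₀ _) (hc₀ t)),
      exp_log (by exact_mod_cast hR.ne'), mul_div_cancel₀ _ (hc₀ t)]
  -- `L` is single-valued around the circle while `ℓ` winds once
  have key := sub_eq_sub_of_exp_eq (hLc.comp (by fun_prop)) hℓc hℓ (2 * Real.pi) 0
  simp only [Function.comp_apply, show c (2 * Real.pi) = c 0 by simp [c], ℓ] at key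
  push_cast at key
  have : (2 * Real.pi : ℂ) * I = 0 := by linear_combination -key
  simp [Real.pi_ne_zero, I_ne_zero] at this

end Complex

theorem exists_eq_zero_of_norm_sub_linearMap_le {E : Type*} [NormedAddCommGroup E] [NormedSpace ℝ E]
    [FiniteDimensional ℝ E] (hE : Module.finrank ℝ E = 2) {T : E →ₗ[ℝ] E}
    (hT : Function.Injective T) {f : E → E} (hf : Continuous f) {C : ℝ}
    (hC : ∀ x, ‖f x - T x‖ ≤ C) : ∃ x, f x = 0 := by
  let e : E ≃L[ℝ] ℂ := .ofFinrankEq (by simp [hE])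
  let S : E ≃L[ℝ] E := (LinearEquiv.ofInjectiveEndo T hT).toContinuousLinearEquiv
  have hS : ∀ x, S x = T x := fun _ => rfl
  obtain ⟨z, hz⟩ := Complex.exists_eq_zero_of_norm_sub_le (f := fun z => e (f (S.symm (e.symm z))))
    (by fun_prop) (C := ‖(e : E →L[ℝ] ℂ)‖ * C) fun z => by
      set x := S.symm (e.symm z)
      have hx : z = e (T x) := by simp [x, ← hS]
      rw [hx, ← map_sub]
      exact (e : E →L[ℝ] ℂ).le_opNorm_of_le (hC x)
  exact ⟨_, by simpa using hz⟩

theorem linearIndependent_pair_iff_det_ne_zero {R : Type*} [CommRing R] [IsDomain R]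
    {x y : R × R} : LinearIndependent R ![x, y] ↔ x.1 * y.2 - x.2 * y.1 ≠ 0 := by
  rw [LinearIndependent.pair_iff]
  constructor
  · intro h hdet
    have hx₂ := (h y.2 (-x.2) (Prod.ext (by simp; linear_combination hdet) (by simp; ring))).2
    have hx₁ := (h y.1 (-x.1) (Prod.ext (by simp; ring) (by simp; linear_combination -hdet))).2
    exact one_ne_zero (h 1 0 (by ext <;> simp_all)).1
  · intro hdet s t hst
    have h₁ : s * x.1 + t * y.1 = 0 := congrArg Prod.fst hst
    have h₂ : s * x.2 + t * y.2 = 0 := congrArg Prod.snd hst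
    refine ⟨?_, ?_⟩
    · refine (mul_eq_zero.1 ?_).resolve_right hdet
      linear_combination y.2 * h₁ - y.1 * h₂
    · refine (mul_eq_zero.1 ?_).resolve_right hdet
      linear_combination x.1 * h₂ - x.2 * h₁

theorem LinearIndependent.injective_smul_sub_smul {R M : Type*} [CommRing R] [AddCommGroup M]
    [Module R M] {x y : M} (h : LinearIndependent R ![x, y]) :
    Function.Injective fun w : R × R => w.1 • x - w.2 • y := by
  intro w w' hw
  have := LinearIndependent.pair_iff.1 h (w.1 - w'.1) (-(w.2 - w'.2)) (by
    simp only [sub_smul, neg_smul]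
    linear_combination (norm := module) hw)
  ext <;> simp_all [sub_eq_zero]

namespace Path

variable {E : Type*} [NormedAddCommGroup E] [NormedSpace ℝ E] {p q : E}

def quasiPeriodicExtend (Γ : Path p q) (u : ℝ) : E :=
  Γ.extend (Int.fract u) + ⌊u⌋ • (q - p)

theorem quasiPeriodicExtend_eq (Γ : Path p q) (u : ℝ) :
    Γ.quasiPeriodicExtend u = (Γ.extend (Int.fract u) - Int.fract u • (q - p)) + u • (q - p) := by
  rw [quasiPeriodicExtend, ← Int.cast_smul_eq_zsmul ℝ, ← Int.self_sub_fract u, sub_smul]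
  abel

@[fun_prop]
theorem continuous_quasiPeriodicExtend (Γ : Path p q) : Continuous Γ.quasiPeriodicExtend := by
  have hperiodic : Continuous ((fun t => Γ.extend t - t • (q - p)) ∘ Int.fract) :=
    ContinuousOn.comp_fract'' (by fun_prop) (by simp)
  exact (hperiodic.add (by fun_prop)).congr fun u => (Γ.quasiPeriodicExtend_eq u).symm

theorem exists_norm_quasiPeriodicExtend_sub_le (Γ : Path p q) :
    ∃ M, ∀ u : ℝ, ‖Γ.quasiPeriodicExtend u - u • (q - p)‖ ≤ M := by
  obtain ⟨M, hM⟩ := isCompact_Icc.exists_bound_of_continuousOn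
    (f := fun t => Γ.extend t - t • (q - p)) (by fun_prop)
  refine ⟨M, fun u => ?_⟩
  rw [quasiPeriodicExtend_eq, add_sub_cancel_right]
  exact hM _ (unitInterval.fract_mem u)

end Path

theorem pr_add_zsmul_intCast (w : ℝ × ℝ) (k : ℤ) (m : ℤ × ℤ) :
    pr (w + k • ((m.1 : ℝ), (m.2 : ℝ))) = pr w := by
  have hint (n : ℤ) : ((k • (n : ℝ) : ℝ) : AddCircle (1 : ℝ)) = 0 :=
    (AddCircle.coe_eq_zero_iff _).2 ⟨k * n, by simp⟩
  simp only [pr, Prod.fst_add, Prod.snd_add, Prod.smul_fst, Prod.smul_snd, AddCircle.coe_add,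
    hint, add_zero]

/-- Two loops on `T²` whose homotopy classes, seen as elements of
`π₁(T²) ≅ ℤ²` (the endpoint displacements of lifts to `ℝ²`), are linearly independent
over `ℤ` must intersect. -/
theorem statement15
    (x y : T2) (γ : Path x x) (σ : Path y y)
    (a b : ℤ × ℤ)
    -- a lift of γ to ℝ², with displacement a = [γ] ∈ ℤ²
    (p q : ℝ × ℝ) (Γ : Path p q) (hΓ : ∀ t, pr (Γ t) = γ t)
    (ha : q - p = ((a.1 : ℝ), (a.2 : ℝ)))
    -- a lift of σ to ℝ², with displacement b = [σ] ∈ ℤ²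
    (r s : ℝ × ℝ) (Sg : Path r s) (hSg : ∀ t, pr (Sg t) = σ t)
    (hb : s - r = ((b.1 : ℝ), (b.2 : ℝ)))
    -- [γ] and [σ] are linearly independent in ℤ²
    (hind : LinearIndependent ℤ ![a, b]) :
    ∃ u v : unitInterval, γ u = σ v := by
  have hli : LinearIndependent ℝ ![q - p, s - r] := by
    rw [linearIndependent_pair_iff_det_ne_zero, ha, hb]
    dsimp only
    exact_mod_cast linearIndependent_pair_iff_det_ne_zero.1 hind
  let T : ℝ × ℝ →ₗ[ℝ] ℝ × ℝ :=
    (LinearMap.fst ℝ ℝ ℝ).smulRight (q - p) - (LinearMap.snd ℝ ℝ ℝ).smulRight (s - r)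
  obtain ⟨M, hM⟩ := Γ.exists_norm_quasiPeriodicExtend_sub_le
  obtain ⟨N, hN⟩ := Sg.exists_norm_quasiPeriodicExtend_sub_le
  have hbound (w : ℝ × ℝ) :
      ‖(Γ.quasiPeriodicExtend w.1 - Sg.quasiPeriodicExtend w.2) - T w‖ ≤ M + N :=
    calc _ = ‖(Γ.quasiPeriodicExtend w.1 - w.1 • (q - p))
          - (Sg.quasiPeriodicExtend w.2 - w.2 • (s - r))‖ := by
            simp only [T, LinearMap.sub_apply, LinearMap.smulRight_apply, LinearMap.fst_apply,
              LinearMap.snd_apply]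
            congr 1; abel
      _ ≤ M + N := (norm_sub_le _ _).trans (add_le_add (hM _) (hN _))
  obtain ⟨⟨u, v⟩, huv⟩ := exists_eq_zero_of_norm_sub_linearMap_le (by simp)
    (T := T) hli.injective_smul_sub_smul (by fun_prop) hbound
  have hmeet := congrArg pr (sub_eq_zero.1 huv)
  simp only [Path.quasiPeriodicExtend, ha, hb, pr_add_zsmul_intCast,
    Path.extend_apply _ (unitInterval.fract_mem _), hΓ, hSg] at hmeet
  exact ⟨_, _, hmeet⟩
end
end
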